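/- arXiv:1805.01883 — 3 statements merged into one kernel-verified Lean document; each statement's English description precedes it below -/
import Mathlib

section
/- Let E/F be a finite field extension and A an m×n matrix over E such that dim_F S_F(A) = Σ_{j=1}^n dim_F span_F(a_{1,j}, ..., a_{m,j}) (i.e., the row-space dimension bound holds with equality). Then for every subset J ⊆ {1,...,n}, one has dim_F S_F(A_J) = Σ_{j∈J} dim_F span_F(a_{1,j}, ..., a_{m,j}), where A_J denotes the restriction of A to the columns indexed by J. -/
open Module Submodule

/-- The product submodule is linearly equivalent to the product of the submodules. -/
def prodSubEquiv {R M N : Type*} [Ring R] [AddCommGroup M] [Module R M] [AddCommGroup N]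
    [Module R N] (p : Submodule R M) (q : Submodule R N) : (p.prod q) ≃ₗ[R] p × q where
  toFun x := (⟨x.1.1, x.2.1⟩, ⟨x.1.2, x.2.2⟩)
  invFun x := ⟨(x.1.1, x.2.1), ⟨x.1.2, x.2.2⟩⟩
  map_add' := by intros; rfl
  map_smul' := by intros; rfl
  left_inv := fun x => rfl
  right_inv := fun x => rfl

lemma finrank_prod_submodule {F M N : Type*} [Field F] [AddCommGroup M] [Module F M]
    [AddCommGroup N] [Module F N] (p : Submodule F M) (q : Submodule F N)
    [FiniteDimensional F p] [FiniteDimensional F q] :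
    finrank F (p.prod q) = finrank F p + finrank F q := by
  rw [(prodSubEquiv p q).finrank_eq, Module.finrank_prod]

lemma finrank_pi_submodule {F : Type*} [Field F] {ι : Type*} [Fintype ι] {M : ι → Type*}
    [∀ i, AddCommGroup (M i)] [∀ i, Module F (M i)] (p : ∀ i, Submodule F (M i))
    [∀ i, FiniteDimensional F (p i)] :
    finrank F (Submodule.pi Set.univ p) = ∑ i, finrank F (p i) := by
  let Φ : (∀ i, p i) →ₗ[F] (∀ i, M i) :=
    LinearMap.pi fun i => (p i).subtype.comp (LinearMap.proj i)
  have hinj : Function.Injective Φ := by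
    intro x y h
    funext i
    exact Subtype.ext (congrFun h i)
  have hrange : LinearMap.range Φ = Submodule.pi Set.univ p := by
    ext x
    constructor
    · rintro ⟨y, rfl⟩ i _
      exact (y i).2
    · intro hx
      exact ⟨fun i => ⟨x i, hx i (Set.mem_univ i)⟩, rfl⟩
  rw [← hrange, LinearMap.finrank_range_of_inj hinj, Module.finrank_pi_fintype]

/-- If the row-space dimension bound holds with equality, it holds with equality for every
subset of columns. -/
theorem stmt_3 (F E : Type*) [Field F] [Field E] [Algebra F E] [FiniteDimensional F E]
    (m n : ℕ) (A : Matrix (Fin m) (Fin n) E)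
    (heq : Module.finrank F
        (Submodule.span F (Set.range fun i => A i) : Submodule F (Fin n → E)) =
      ∑ j : Fin n, Module.finrank F (Submodule.span F (Set.range fun i => A i j))) :
    ∀ J : Finset (Fin n),
      Module.finrank F
          (Submodule.span F (Set.range fun i => fun j : J => A i j) :
            Submodule F (J → E)) =
        ∑ j ∈ J, Module.finrank F (Submodule.span F (Set.range fun i => A i j)) := by
  intro J
  classical
  -- Lemma A: upper bound for any column subset
  have hle : ∀ K : Finset (Fin n),
      finrank F (span F (Set.range fun i => fun j : K => A i j) : Submodule F (K → E)) ≤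
        ∑ j ∈ K, finrank F (span F (Set.range fun i => A i j)) := by
    intro K
    have hsub : span F (Set.range fun i => fun j : K => A i j) ≤
        Submodule.pi Set.univ (fun j : K => span F (Set.range fun i => A i (j : Fin n))) := by
      rw [span_le]
      rintro _ ⟨i, rfl⟩ j _
      exact subset_span ⟨i, rfl⟩
    calc finrank F (span F (Set.range fun i => fun j : K => A i j) : Submodule F (K → E))
        ≤ finrank F
            (Submodule.pi Set.univ
              (fun j : K => span F (Set.range fun i => A i (j : Fin n)))) :=
          Submodule.finrank_mono hsub
      _ = ∑ j : K, finrank F (span F (Set.range fun i => A i (j : Fin n))) :=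
          finrank_pi_submodule _
      _ = ∑ j ∈ K, finrank F (span F (Set.range fun i => A i j)) := by
          rw [← Finset.sum_attach K fun j => finrank F (span F (Set.range fun i => A i j))]
          rfl
  -- Lemma B: split the full row space over J and Jᶜ
  have hsplit : finrank F (span F (Set.range fun i => A i) : Submodule F (Fin n → E)) ≤
      finrank F (span F (Set.range fun i => fun j : J => A i j) : Submodule F (J → E)) +
      finrank F (span F (Set.range fun i => fun j : (Jᶜ : Finset (Fin n)) => A i j) :
        Submodule F ((Jᶜ : Finset (Fin n)) → E)) := by
    set φ : (Fin n → E) →ₗ[F] (J → E) × ((Jᶜ : Finset (Fin n)) → E) :=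
      (LinearMap.funLeft F E (fun j : J => (j : Fin n))).prod
        (LinearMap.funLeft F E (fun j : (Jᶜ : Finset (Fin n)) => (j : Fin n))) with hφ
    have hinj : Function.Injective φ := by
      intro x y h
      funext i
      by_cases hi : i ∈ J
      · exact congrFun (congrArg Prod.fst h) ⟨i, hi⟩
      · exact congrFun (congrArg Prod.snd h) ⟨i, Finset.mem_compl.mpr hi⟩
    have hfr := LinearEquiv.finrank_eq
      (Submodule.equivMapOfInjective φ hinj (span F (Set.range fun i => A i)))
    rw [hfr]
    have hmap : Submodule.map φ (span F (Set.range fun i => A i)) ≤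
        (span F (Set.range fun i => fun j : J => A i j)).prod
          (span F (Set.range fun i => fun j : (Jᶜ : Finset (Fin n)) => A i j)) := by
      rw [Submodule.map_span, span_le]
      rintro _ ⟨_, ⟨i, rfl⟩, rfl⟩
      exact ⟨subset_span ⟨i, rfl⟩, subset_span ⟨i, rfl⟩⟩
    calc finrank F (Submodule.map φ (span F (Set.range fun i => A i)))
        ≤ finrank F
            ((span F (Set.range fun i => fun j : J => A i j)).prod
              (span F (Set.range fun i => fun j : (Jᶜ : Finset (Fin n)) => A i j))) :=
          Submodule.finrank_mono hmap
      _ = _ := finrank_prod_submodule _ _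
  have h1 := hle J
  have h2 := hle Jᶜ
  have hsum : (∑ j ∈ Jᶜ, finrank F (span F (Set.range fun i => A i j))) +
      ∑ j ∈ J, finrank F (span F (Set.range fun i => A i j)) =
      ∑ j : Fin n, finrank F (span F (Set.range fun i => A i j)) :=
    Finset.sum_compl_add_sum J _
  omega
end

section
/- Let d₁, ..., dₘ be positive integers such that for every j ∈ {1,...,m}, d_j does not divide lcm(dᵢ : i ≠ j). Then lcm(d₁, ..., dₘ) ≥ ∏_{i=1}^m pᵢ, where pᵢ denotes the i-th smallest prime number. -/
/-!
For each `j` pick a prime `qⱼ` at which `dⱼ` has a higher exponent than the lcm of the other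
`dᵢ`. Comparing exponents at `qᵢ = qⱼ` shows that `j ↦ qⱼ` is injective, so the lcm is divisible
by `m` distinct primes, whose product is at least that of the first `m` primes.
-/

open Finset

namespace Nat

variable {p : ℕ → Prop} [DecidablePred p]

theorem nth_card_le_of_forall_lt {s : Finset ℕ} {a : ℕ} (hs : ∀ x ∈ s, p x)
    (hlt : ∀ x ∈ s, x < a) (ha : p a) : nth p #s ≤ a := by
  have hsub : insert a s ⊆ {x ∈ range (a + 1) | p x} := by
    intro x hx
    rcases mem_insert.mp hx with rfl | hx
    · simpa using ha
    · simpa using ⟨(hlt x hx).le, hs x hx⟩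
  have hcount : #s < count p (a + 1) := by
    rw [count_eq_card_filter_range]
    exact (card_lt_card (ssubset_insert fun h => lt_irrefl a (hlt a h))).trans_le
      (card_le_card hsub)
  exact le_of_lt_succ (nth_lt_of_lt_count hcount)

theorem prod_range_nth_le_prod {s : Finset ℕ} (hs : ∀ x ∈ s, p x) :
    ∏ i ∈ range #s, nth p i ≤ ∏ x ∈ s, x := by
  induction s using Finset.induction_on_max with
  | empty => simp
  | insert a s hlt ih =>
    have ha : a ∉ s := fun h => lt_irrefl a (hlt a h)
    have hs' : ∀ x ∈ s, p x := fun x hx => hs x (mem_insert_of_mem hx)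
    rw [card_insert_of_notMem ha, prod_range_succ, prod_insert ha, mul_comm]
    exact Nat.mul_le_mul (nth_card_le_of_forall_lt hs' hlt (hs a (mem_insert_self a s))) (ih hs')

theorem exists_factorization_lt_of_not_dvd {a b : ℕ} (ha : a ≠ 0) (hb : b ≠ 0) (h : ¬a ∣ b) :
    ∃ q, b.factorization q < a.factorization q := by
  simpa [← factorization_le_iff_dvd ha hb, Finsupp.le_def] using h

theorem prod_nth_prime_le_lcm {ι : Type*} [Fintype ι] [DecidableEq ι] {d : ι → ℕ}
    (hd : ∀ j, d j ≠ 0) (h : ∀ j, ¬d j ∣ (univ.erase j).lcm d) :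
    ∏ i ∈ range (Fintype.card ι), nth Nat.Prime i ≤ univ.lcm d := by
  have hlcm : ∀ s : Finset ι, s.lcm d ≠ 0 := fun s => lcm_ne_zero_iff.mpr fun j _ => hd j
  choose q hq using fun j => exists_factorization_lt_of_not_dvd (hd j) (hlcm _) (h j)
  have hfac_le : ∀ i j, i ≠ j →
      (d i).factorization (q j) ≤ ((univ.erase j).lcm d).factorization (q j) := fun i j hij =>
    (factorization_le_iff_dvd (hd i) (hlcm _)).mpr (dvd_lcm (by simp [hij])) _
  have hq_inj : Function.Injective q := by
    intro i j hij
    by_contra hne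
    have hij_lt := (hfac_le i j hne).trans_lt (hq j)
    have hji_lt := (hfac_le j i (Ne.symm hne)).trans_lt (hq i)
    rw [hij] at hji_lt
    exact lt_asymm hij_lt hji_lt
  have hq_dvd : ∀ j, q j ∣ univ.lcm d := fun j =>
    (dvd_of_factorization_pos (hq j).ne_bot).trans (dvd_lcm (mem_univ j))
  have hq_prime : ∀ j, (q j).Prime := fun j =>
    not_imp_comm.mp (factorization_eq_zero_of_not_prime _) (hq j).ne_bot
  calc ∏ i ∈ range (Fintype.card ι), nth Nat.Prime i
      = ∏ i ∈ range #(univ.image q), nth Nat.Prime i := by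
        rw [Finset.card_image_of_injective _ hq_inj, Finset.card_univ]
    _ ≤ ∏ x ∈ univ.image q, x := prod_range_nth_le_prod (by simpa using hq_prime)
    _ ≤ univ.lcm d := le_of_dvd (pos_of_ne_zero (hlcm _))
        (prod_primes_dvd _ (by simpa using fun j => (hq_prime j).prime) (by simpa using hq_dvd))

end Nat

/-- If no d_j divides the lcm of the others, then lcm(d₁,…,dₘ) ≥ product of the first m primes. -/
theorem stmt_4 (m : ℕ) (d : Fin m → ℕ) (hd : ∀ j, 0 < d j)
    (h : ∀ j, ¬ d j ∣ (Finset.univ.erase j).lcm d) :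
    Finset.univ.lcm d ≥ ∏ i ∈ Finset.range m, Nat.nth Nat.Prime i := by
  simpa using Nat.prod_nth_prime_le_lcm (fun j => (hd j).ne') h
end

section
/- Let F be a field, let Ω = {ω₁, ..., ωₙ} be n distinct elements of F, and let RS_F(n,k,Ω) be the Reed–Solomon code {(f(ω₁), ..., f(ωₙ)) : f ∈ F[x], deg f ≤ k−1} with 1 ≤ k ≤ n. Then for every polynomial g ∈ F[x] with deg g ≤ n−k−1, the vector (v₁ g(ω₁), ..., vₙ g(ωₙ)), where vᵢ = ∏_{j≠i} (ωᵢ − ω_j)^{−1}, is orthogonal (under the standard bilinear form Σ xᵢyᵢ) to every codeword of RS_F(n,k,Ω). -/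
open Polynomial Finset in
theorem aux_sum_weight (F : Type*) [Field F] (n : ℕ) (ω : Fin n → F)
    (hω : Function.Injective ω) (h : F[X]) (hd : h.degree < (n - 1 : ℕ)) :
    ∑ i, Lagrange.nodalWeight Finset.univ ω i * h.eval (ω i) = 0 := by
  rcases Nat.eq_zero_or_pos n with rfl | hn
  · simp
  have hcard : (Finset.univ : Finset (Fin n)).card = n := by simp
  have hinj : Set.InjOn ω (Finset.univ : Finset (Fin n)) := fun a _ b _ => fun e => hω e
  have heq : h = Lagrange.interpolate Finset.univ ω (fun i => h.eval (ω i)) :=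
    Lagrange.eq_interpolate hinj (by rw [hcard]; exact hd.trans_le (by
      exact_mod_cast Nat.cast_le.mpr (Nat.sub_le n 1)))
  -- coefficient of X^(n-1)
  have hc : h.coeff (n - 1) = 0 :=
    Polynomial.coeff_eq_zero_of_degree_lt hd
  rw [heq] at hc
  rw [Lagrange.interpolate_apply] at hc
  rw [Polynomial.finset_sum_coeff] at hc
  rw [← hc]
  refine Finset.sum_congr rfl fun i _ => ?_
  rw [Lagrange.basis_eq_prod_sub_inv_mul_nodal_div (mem_univ i)]
  have hnd : Lagrange.nodal Finset.univ ω / (X - C (ω i)) = Lagrange.nodal (Finset.univ.erase i) ω := by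
    rw [Lagrange.nodal_eq_mul_nodal_erase (mem_univ i)]
    exact mul_div_cancel_left₀ _ (X_sub_C_ne_zero (ω i))
  rw [hnd]
  have hmonic : (Lagrange.nodal (Finset.univ.erase i) ω).Monic := Lagrange.nodal_monic
  have hdeg : (Lagrange.nodal (Finset.univ.erase i) ω).natDegree = n - 1 := by
    rw [Lagrange.natDegree_nodal, Finset.card_erase_of_mem (mem_univ i), hcard]
  have : (Lagrange.nodal (Finset.univ.erase i) ω).coeff (n - 1) = 1 := by
    rw [← hdeg]; exact hmonic.coeff_natDegree
  rw [mul_comm (C _), mul_assoc, Polynomial.coeff_C_mul, Polynomial.coeff_mul_C, this]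
  ring

open Polynomial in
/-- The vector (vᵢ g(ωᵢ))ᵢ with vᵢ = ∏_{j≠i}(ωᵢ−ω_j)⁻¹ and deg g ≤ n−k−1 is orthogonal to
every codeword of the Reed–Solomon code RS_F(n,k,Ω). -/
theorem stmt_14 (F : Type*) [Field F] (n k : ℕ) (hk : 1 ≤ k) (hkn : k < n)
    (ω : Fin n → F) (hω : Function.Injective ω)
    (v : Fin n → F) (hv : ∀ i, v i = ∏ j ∈ Finset.univ.erase i, (ω i - ω j)⁻¹)
    (g : F[X]) (hg : g.natDegree ≤ n - k - 1) :
    ∀ f : F[X], f.natDegree ≤ k - 1 →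
      ∑ i, f.eval (ω i) * (v i * g.eval (ω i)) = 0 := by
  intro f hf
  have key := aux_sum_weight F n ω hω (f * g) ?_
  · rw [← key]
    refine Finset.sum_congr rfl fun i _ => ?_
    rw [hv i, Lagrange.nodalWeight, Polynomial.eval_mul]
    ring
  · calc (f * g).degree ≤ f.degree + g.degree := degree_mul_le f g
      _ < (n - 1 : ℕ) := by
        rcases eq_or_ne f 0 with rfl | hf0
        · simp [WithBot.bot_lt_iff_ne_bot]
        rcases eq_or_ne g 0 with rfl | hg0
        · simp [WithBot.bot_lt_iff_ne_bot]
        rw [degree_eq_natDegree hf0, degree_eq_natDegree hg0, ← Nat.cast_add,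
          Nat.cast_lt]
        have : f.natDegree + g.natDegree ≤ (k - 1) + (n - k - 1) :=
          Nat.add_le_add hf hg
        omega
end
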